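/- Let λ be a partition lying in 𝒫_C, with distinct even parts 2x_1 > … > 2x_ℓ of multiplicities r_1, …, r_ℓ, and let T be an admissible domino tableau of type C and shape λ. Then the partition of B_λ = {0, 2x_1, …, 2x_ℓ} into the fibers of b_T over the open clusters of T is an even NCP of B_λ: it is a noncrossing partition, 0 lies in the fiber b_T^{-1}(b_T(0)), and for every fiber L not containing 0 the sum Σ_{j : 2x_j ∈ L} r_j is even. -/

import Mathlib

/-- A domino in the plane (rows and columns numbered from 1, matrix style):
`H i j` is the horizontal domino with boxes `(i,j)` and `(i,j+1)`;
`V i j` is the vertical domino with boxes `(i,j)` and `(i+1,j)`. -/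
inductive Domino : Type
  | H : ℕ → ℕ → Domino
  | V : ℕ → ℕ → Domino
deriving DecidableEq

/-- The two boxes of a domino. -/
def Domino.boxes : Domino → Finset (ℕ × ℕ)
  | .H i j => {(i, j), (i, j + 1)}
  | .V i j => {(i, j), (i + 1, j)}

/-- The boxes of a domino have row and column indices `≥ 1`. -/
def Domino.valid : Domino → Prop
  | .H i j => 1 ≤ i ∧ 1 ≤ j
  | .V i j => 1 ≤ i ∧ 1 ≤ j

/-- A domino of type `(I+)` (type C): vertical, lying in an even column. -/
def Domino.IsIPlus : Domino → Prop
  | .H _ _ => False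
  | .V _ j => j % 2 = 0

/-- A domino tableau with `n` dominoes is encoded as a list of dominoes **in
decreasing order of labels**: the head has label `n` and the last element has
label `1`; `T^i` (dominoes with labels `≤ i`) is `T.drop (n - i)`. -/
def boxesOf (T : List Domino) : Finset (ℕ × ℕ) :=
  T.foldr (fun d s => d.boxes ∪ s) ∅

/-- The length of row `i` of the tableau `T`. -/
def rowLen (T : List Domino) (i : ℕ) : ℕ :=
  ((boxesOf T).filter (fun p => p.1 = i)).card

/-- The shape of `T`: the multiset of (positive) row lengths, i.e. the partition
whose Young diagram is the set of boxes of `T`. -/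
def shapeOf (T : List Domino) : Multiset ℕ :=
  ((boxesOf T).image Prod.fst).val.map (rowLen T)

/-- The set of parts of the shape of `T`. -/
def partsFinset (T : List Domino) : Finset ℕ :=
  ((boxesOf T).image Prod.fst).image (rowLen T)

/-- The label of the box `p` in `T` (the head of `T` has the largest label
`T.length`; boxes outside `T` get the junk value `0`). -/
def labelOf : List Domino → ℕ × ℕ → ℕ
  | [], _ => 0
  | d :: rest, p => if p ∈ d.boxes then rest.length + 1 else labelOf rest p

/-- Van Leeuwen's clusters of an (admissible, type C) domino tableau `T`, by induction
on the number of dominoes. `(clusterData T).1` is the set of clusters, each cluster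
being the `Finset` of the labels of its dominoes, and `(clusterData T).2` is the map
`b_T`, sending each even number `2i` (an element of `B_λ = {0} ∪ {even parts}`) to a
cluster. If `T = [d]`, there is one cluster and `b_T` is constant. For `T = d :: rest`
with `d` the domino of maximal label `n`: if `d` is of type (N) in columns `2i−1, 2i`,
the clusters `b'(2i−2)`, `d` and (when `2i` is a part of the shape of `rest`) `b'(2i)`
merge into a new cluster; if `d` is of type (I+) in column `2i`, `d` and (when `2i` is
a part) `b'(2i)` merge; if `d` is of type (I−) in column `2i+1`, `d` and `b'(2i)`
merge. The untouched clusters and values of `b'` persist, and all members of `B_λ`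
previously sent to a merged cluster (as well as `2i`, in the (N) and (I+) cases) are
sent to the new cluster. -/
def clusterData : List Domino → Finset (Finset ℕ) × (ℕ → Finset ℕ)
  | [] => (∅, fun _ => ∅)
  | [_] => ({({1} : Finset ℕ)}, fun _ => ({1} : Finset ℕ))
  | d :: rest =>
      let P := clusterData rest
      let n := rest.length + 1
      match d with
      | .H _ j =>
          if j % 2 = 1 then
            -- type (N), columns j = 2i−1 and c = 2i
            let c := j + 1
            let olds : Finset (Finset ℕ) :=
              if c ∈ partsFinset rest then {P.2 (c - 2), P.2 c} else {P.2 (c - 2)}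
            let newC : Finset ℕ :=
              insert n (if c ∈ partsFinset rest then P.2 (c - 2) ∪ P.2 c else P.2 (c - 2))
            ((P.1 \ olds) ∪ {newC},
             fun m => if P.2 m ∈ olds ∨ m = c then newC else P.2 m)
          else P
      | .V _ j =>
          if j % 2 = 0 then
            -- type (I+), column c = 2i
            let c := j
            if c ∈ partsFinset rest then
              let newC : Finset ℕ := insert n (P.2 c)
              ((P.1 \ {P.2 c}) ∪ {newC},
               fun m => if P.2 m = P.2 c ∨ m = c then newC else P.2 m)
            else
              let newC : Finset ℕ := ({n} : Finset ℕ)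
              (P.1 ∪ {newC}, fun m => if m = c then newC else P.2 m)
          else
            -- type (I−), column j = 2i+1, merge with b'(2i)
            let c := j - 1
            let newC : Finset ℕ := insert n (P.2 c)
            ((P.1 \ {P.2 c}) ∪ {newC},
             fun m => if P.2 m = P.2 c then newC else P.2 m)

/-- The set of boxes is a Young diagram (rows/columns from 1, left- and top-justified). -/
def IsYoungDiagramSet (S : Finset (ℕ × ℕ)) : Prop :=
  (∀ p ∈ S, 1 ≤ p.1 ∧ 1 ≤ p.2) ∧
  (∀ i j, (i, j + 1) ∈ S → 1 ≤ j → (i, j) ∈ S) ∧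
  (∀ i j, (i + 1, j) ∈ S → 1 ≤ i → (i, j) ∈ S)

/-- `T` (a list of dominoes in decreasing label order) is a standard domino tableau:
the dominoes are pairwise disjoint, their union is a Young diagram, and the labels
weakly increase along rows and columns. -/
def IsStandardDT (T : List Domino) : Prop :=
  (∀ d ∈ T, d.valid) ∧
  T.Pairwise (fun d d' => Disjoint d.boxes d'.boxes) ∧
  IsYoungDiagramSet (boxesOf T) ∧
  (∀ i j, (i, j) ∈ boxesOf T → (i + 1, j) ∈ boxesOf T →
    labelOf T (i, j) ≤ labelOf T (i + 1, j)) ∧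
  (∀ i j, (i, j) ∈ boxesOf T → (i, j + 1) ∈ boxesOf T →
    labelOf T (i, j) ≤ labelOf T (i, j + 1))

/-- A partition is of type C: it is a partition of an even number in which every odd
part has even multiplicity. -/
def IsTypeCShape (μ : Multiset ℕ) : Prop :=
  Even μ.sum ∧ ∀ m, Odd m → Even (μ.count m)

/-- `T` is an admissible domino tableau of type C: it is standard, and the shape of
every `T^i` (here: of every suffix of the list) is of type C. -/
def IsAdmissibleC (T : List Domino) : Prop :=
  IsStandardDT T ∧ ∀ k, IsTypeCShape (shapeOf (T.drop k))

/-- `P` is a partition of the finite set `B ⊆ ℕ` into nonempty blocks. -/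
def IsPartitionOf (B : Finset ℕ) (P : Finset (Finset ℕ)) : Prop :=
  (∀ L ∈ P, L.Nonempty) ∧ (∀ L ∈ P, L ⊆ B) ∧ ∀ b ∈ B, ∃! L, L ∈ P ∧ b ∈ L

/-- The noncrossing condition on the blocks. -/
def PairwiseNoncrossing (P : Finset (Finset ℕ)) : Prop :=
  ∀ L ∈ P, ∀ L' ∈ P, L ≠ L' →
    ∀ a ∈ L, ∀ b ∈ L, ∀ c ∈ L', ∀ d ∈ L', a ≤ b → c ≤ d →
      Finset.Icc a b ∩ Finset.Icc c d = ∅ ∨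
      Finset.Icc a b ⊆ Finset.Icc c d ∨ Finset.Icc c d ⊆ Finset.Icc a b

/-- A noncrossing partition (NCP) of the finite set `B ⊆ ℕ`. -/
def IsNCP (B : Finset ℕ) (P : Finset (Finset ℕ)) : Prop :=
  IsPartitionOf B P ∧ PairwiseNoncrossing P

/-- `B_λ = {0, 2x₁, …, 2x_ℓ}` (indices `1, …, ℓ`). -/
def Blam (ℓ : ℕ) (x : ℕ → ℕ) : Finset ℕ :=
  insert 0 ((Finset.Icc 1 ℓ).image (fun i => 2 * x i))

/-- An even NCP of `B_λ`: an NCP such that every block `L` not containing `0` has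
`r(L) = Σ_{j : 2x_j ∈ L} r_j` even (the block `L₀` containing `0` is unrestricted). -/
def IsEvenNCP (ℓ : ℕ) (x r : ℕ → ℕ) (P : Finset (Finset ℕ)) : Prop :=
  IsNCP (Blam ℓ x) P ∧
    ∀ L ∈ P, 0 ∉ L →
      Even (∑ j ∈ (Finset.Icc 1 ℓ).filter (fun j => 2 * x j ∈ L), r j)

/-- The partition of `B_λ` into the fibers of the cluster map `b_T` (equivalently, over
the open clusters of `T`, which are exactly the clusters in the image of `b_T`). -/
def fibersOf (ℓ : ℕ) (x : ℕ → ℕ) (T : List Domino) : Finset (Finset ℕ) :=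
  (Blam ℓ x).image
    (fun v => (Blam ℓ x).filter (fun w => (clusterData T).2 w = (clusterData T).2 v))

/-!
Both properties are invariants of the inductive construction of `b_T`, so they hold for every
`T^i`. Adding the domino with the largest label acts on the partition of the even numbers into
fibers of `b_T` in one of three ways: the fibers of the neighbours `2i - 2` and `2i` are merged
(type (N)), one cluster grows without changing any fiber (type (I-), and type (I+) when `2i` is
already a part), or `2i` is moved to a new singleton fiber (type (I+) otherwise). After halving,
the merged points are adjacent, and all three operations keep a partition noncrossing.

For the parity, the invariant is that every fiber not containing `0` contains the lengths of an
even number of rows of even length. The new domino only touches its own rows: a horizontal one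
replaces a part `j - 1` by `j + 1`, a vertical one two parts `j - 1` by two parts `j`, and in
type (N) both `j - 1` and `j + 1` end up in the merged fiber. Finally, `r(L)` is the number of
rows (with multiplicity) whose length lies in `L`.
-/

/-- With `p = q` this only renames the fiber of `p`. -/
def mergeFibers {α : Type*} [DecidableEq α] (f : ℕ → α) (p q : ℕ) (C : α) : ℕ → α :=
  fun u => if f u = f p ∨ f u = f q then C else f u

theorem eq_of_update_apply_eq {α : Type*} {f : ℕ → α} {C : α} (hC : ∀ u, f u ≠ C) (q u : ℕ)
    (h : Function.update f q C u = C) : u = q := by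
  by_contra hu
  rw [Function.update_of_ne hu] at h
  exact hC u h

section Noncrossing

variable {α : Type*} {f : ℕ → α} {C : α} {p q : ℕ}

def Noncrossing (f : ℕ → α) : Prop :=
  ∀ ⦃a b c d : ℕ⦄, a < b → b < c → c < d → f a = f c → f b = f d → f a = f b

theorem Noncrossing.update (hf : Noncrossing f) (hC : ∀ u, f u ≠ C) (q : ℕ) :
    Noncrossing (Function.update f q C) := by
  have key : ∀ {u v}, u < v → Function.update f q C u = Function.update f q C v →
      u ≠ q ∧ f u = f v := by
    intro u v huv h
    by_cases hu : u = q
    · subst hu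
      rw [Function.update_self, Function.update_of_ne huv.ne'] at h
      exact absurd h.symm (hC v)
    by_cases hv : v = q
    · subst hv
      rw [Function.update_self, Function.update_of_ne hu] at h
      exact absurd h (hC u)
    rw [Function.update_of_ne hu, Function.update_of_ne hv] at h
    exact ⟨hu, h⟩
  intro a b c d hab hbc hcd hac hbd
  obtain ⟨ha, hac⟩ := key (hab.trans hbc) hac
  obtain ⟨hb, hbd⟩ := key (hbc.trans hcd) hbd
  rw [Function.update_of_ne ha, Function.update_of_ne hb]
  exact hf hab hbc hcd hac hbd

/-- Since no point lies strictly between `p` and `q`, a fiber crossing the merged one would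
already cross the fiber of `p` or that of `q`. -/
theorem Noncrossing.mergeFibers [DecidableEq α] (hf : Noncrossing f) (hpq : q = p ∨ q = p + 1)
    (hC : ∀ u, f u = C → u = q) : Noncrossing (mergeFibers f p q C) := by
  set g := _root_.mergeFibers f p q C
  let M : ℕ → Prop := fun u => f u = f p ∨ f u = f q
  have hin : ∀ {u}, M u → g u = C := fun h => if_pos h
  have hout : ∀ {u}, ¬ M u → g u = f u := fun h => if_neg h
  have hCM : ∀ {u}, f u = C → M u := fun h => Or.inr (congrArg f (hC _ h))
  have same : ∀ {u v}, g u = g v → (M u ↔ M v) ∧ (¬ M u → f u = f v) := by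
    intro u v h
    by_cases hu : M u <;> by_cases hv : M v
    · exact ⟨iff_of_true hu hv, absurd hu⟩
    · rw [hin hu, hout hv] at h; exact absurd (hCM h.symm) hv
    · rw [hout hu, hin hv] at h; exact absurd (hCM h) hu
    · rw [hout hu, hout hv] at h; exact ⟨iff_of_false hu hv, fun _ => h⟩
  have wit : ∀ {u}, M u → ∃ x, (x = p ∨ x = q) ∧ f u = f x := by
    rintro u (h | h)
    exacts [⟨p, Or.inl rfl, h⟩, ⟨q, Or.inr rfl, h⟩]
  have toM : ∀ {u x}, (x = p ∨ x = q) → f u = f x → M u := by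
    rintro u x (rfl | rfl) h
    exacts [Or.inl h, Or.inr h]
  have ne : ∀ {u x}, ¬ M u → (x = p ∨ x = q) → u ≠ x := fun hu hx h =>
    hu (toM hx (congrArg f h))
  intro a b c d hab hbc hcd hac hbd
  obtain ⟨hMac, hfac⟩ := same hac
  obtain ⟨hMbd, hfbd⟩ := same hbd
  by_cases ha : M a <;> by_cases hb : M b
  · rw [hin ha, hin hb]
  · exfalso
    obtain ⟨x, hx, hcx⟩ := wit (hMac.mp ha)
    obtain ⟨y, hy, hay⟩ := wit ha
    have hbx := ne hb hx; have hdx := ne (mt hMbd.mpr hb) hx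
    have hby := ne hb hy; have hdy := ne (mt hMbd.mpr hb) hy
    have hfbd := hfbd hb
    rcases (by omega : x < b ∨ (b < y ∧ y < d) ∨ d < x) with h | ⟨h1, h2⟩ | h
    · exact hb (toM hx (hf h hbc hcd hcx.symm hfbd).symm)
    · exact hb (toM hy ((hf hab h1 h2 hay hfbd).symm.trans hay))
    · exact hb (toM hx ((hf hbc hcd h hfbd hcx).trans hcx))
  · exfalso
    obtain ⟨x, hx, hbx⟩ := wit hb
    obtain ⟨y, hy, hdy⟩ := wit (hMbd.mp hb)
    have hax := ne ha hx; have hcx := ne (mt hMac.mpr ha) hx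
    have hay := ne ha hy; have hcy := ne (mt hMac.mpr ha) hy
    have hfac := hfac ha
    rcases (by omega : x < a ∨ (a < y ∧ y < c) ∨ c < x) with h | ⟨h1, h2⟩ | h
    · exact ha (toM hx (hf h hab hbc hbx.symm hfac).symm)
    · exact ha (toM hy (hf h1 h2 hcd hfac hdy.symm))
    · exact ha (toM hx ((hf hab hbc h hfac hbx).trans hbx))
  · rw [hout ha, hout hb]
    exact hf hab hbc hcd (hfac ha) (hfbd hb)

end Noncrossing

section EvenFibers

variable {α : Type*} [DecidableEq α] {f : ℕ → α} {μ : Multiset ℕ}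

def EvenFibers (μ : Multiset ℕ) (f : ℕ → α) : Prop :=
  ∀ C, C ≠ f 0 → Even (Multiset.card (μ.filter fun m => Even m ∧ f m = C))

theorem EvenFibers.update (h : EvenFibers μ f) {q : ℕ} (hq0 : q ≠ 0) (hqμ : q ∉ μ) (C : α) :
    EvenFibers μ (Function.update f q C) := by
  intro X hX
  rw [Function.update_of_ne hq0.symm] at hX
  rw [Multiset.filter_congr fun m hm => by
    rw [Function.update_of_ne (ne_of_mem_of_not_mem hm hqμ)]]
  exact h X hX

theorem EvenFibers.mergeFibers (h : EvenFibers μ f) {p q : ℕ} {C : α}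
    (hC : ∀ u, f u = C → u = q) : EvenFibers μ (mergeFibers f p q C) := by
  have hmerge : ∀ u, _root_.mergeFibers f p q C u = C ↔ f u = f p ∨ f u = f q := by
    intro u
    unfold _root_.mergeFibers
    split_ifs with hu
    · exact iff_of_true rfl hu
    · exact iff_of_false (fun h => hu (Or.inr (congrArg f (hC u h)))) hu
  have hkeep : ∀ u, ¬(f u = f p ∨ f u = f q) → _root_.mergeFibers f p q C u = f u :=
    fun u hu => if_neg hu
  intro X hX
  by_cases hXC : X = C
  · subst hXC
    have h0 : f 0 ≠ f p ∧ f 0 ≠ f q := not_or.mp (mt (hmerge 0).mpr hX.symm)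
    rw [Multiset.filter_congr fun m _ => by rw [hmerge, and_or_left]]
    by_cases hpq : f p = f q
    · simp only [hpq, or_self]
      exact h _ (hpq ▸ h0.1).symm
    · have hdisj : μ.filter (fun m => (Even m ∧ f m = f p) ∧ (Even m ∧ f m = f q)) = 0 :=
        Multiset.filter_eq_nil.mpr fun m _ hm => hpq (hm.1.2.symm.trans hm.2.2)
      rw [← add_zero (Multiset.filter _ μ), ← hdisj, ← Multiset.filter_add_filter,
        Multiset.card_add]
      exact (h _ h0.1.symm).add (h _ h0.2.symm)
  by_cases hXpq : X = f p ∨ X = f q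
  · suffices μ.filter (fun m => Even m ∧ _root_.mergeFibers f p q C m = X) = 0 by
      simp [this]
    refine Multiset.filter_eq_nil.mpr fun m _ ⟨_, hm⟩ => ?_
    by_cases hcond : f m = f p ∨ f m = f q
    · exact hXC (hm.symm.trans ((hmerge m).mpr hcond))
    · rw [hkeep m hcond] at hm
      exact hcond (hm ▸ hXpq)
  · have hX0 : X ≠ f 0 := by
      by_cases h0 : f 0 = f p ∨ f 0 = f q
      · rintro rfl; exact hXpq h0
      · rwa [hkeep 0 h0] at hX
    rw [Multiset.filter_congr (q := fun m => Even m ∧ f m = X) fun m _ => ?_]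
    · exact h X hX0
    by_cases hcond : f m = f p ∨ f m = f q
    · rw [(hmerge m).mpr hcond]
      exact and_congr_right fun _ => iff_of_false (Ne.symm hXC) fun hm => hXpq (hm ▸ hcond)
    · rw [hkeep m hcond]

/-- `A` may contain `0`, the old length of a row that the new domino starts; it is not a part. -/
theorem EvenFibers.of_add_eq_add {μ' A B : Multiset ℕ} (h : EvenFibers μ f)
    (hμ : μ' + A.filter (· ≠ 0) = μ + B)
    (hAB : ∀ C, C ≠ f 0 → (Even (Multiset.card (A.filter fun m => Even m ∧ f m = C)) ↔
      Even (Multiset.card (B.filter fun m => Even m ∧ f m = C)))) :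
    EvenFibers μ' f := by
  intro C hC
  have hA : (A.filter (· ≠ 0)).filter (fun m => Even m ∧ f m = C) =
      A.filter fun m => Even m ∧ f m = C := by
    rw [Multiset.filter_filter]
    exact Multiset.filter_congr fun m _ =>
      and_iff_left_of_imp fun hm h0 => hC (h0 ▸ hm.2).symm
  have hcard := congrArg (fun ν => Even (Multiset.card (ν.filter fun m => Even m ∧ f m = C))) hμ
  simp only [Multiset.filter_add, Multiset.card_add, hA, Nat.even_add] at hcard
  have := h C hC
  have := hAB C hC
  tauto

theorem even_card_filter_pair (P : ℕ → Prop) [DecidablePred P] (a : ℕ) :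
    Even (Multiset.card (({a, a} : Multiset ℕ).filter P)) := by
  by_cases h : P a <;> simp [Multiset.filter_singleton, h]

end EvenFibers

section Tableau

variable {d : Domino} {R : List Domino} {i j : ℕ}

theorem boxesOf_cons (d : Domino) (R : List Domino) : boxesOf (d :: R) = d.boxes ∪ boxesOf R :=
  rfl

theorem disjoint_boxesOf {s : Finset (ℕ × ℕ)} :
    ∀ {L : List Domino}, (∀ e ∈ L, Disjoint s e.boxes) → Disjoint s (boxesOf L)
  | [], _ => Finset.disjoint_empty_right s
  | e :: _, h => Finset.disjoint_union_right.mpr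
      ⟨h e List.mem_cons_self, disjoint_boxesOf fun e' he' => h e' (List.mem_cons_of_mem e he')⟩

theorem IsStandardDT.disjoint_head (hT : IsStandardDT (d :: R)) :
    Disjoint d.boxes (boxesOf R) :=
  disjoint_boxesOf (List.pairwise_cons.mp hT.2.1).1

theorem labelOf_le_length : ∀ (T : List Domino) (p : ℕ × ℕ), labelOf T p ≤ T.length
  | [], _ => le_rfl
  | d :: R, p => by
    unfold labelOf
    split_ifs
    · exact le_rfl
    · exact (labelOf_le_length R p).trans (Nat.le_succ _)

theorem labelOf_cons_of_mem_tail (hdisj : Disjoint d.boxes (boxesOf R)) {p : ℕ × ℕ}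
    (hp : p ∈ boxesOf R) : labelOf (d :: R) p = labelOf R p :=
  if_neg (Finset.disjoint_right.mp hdisj hp)

theorem labelOf_cons_lt (hdisj : Disjoint d.boxes (boxesOf R)) {p p' : ℕ × ℕ}
    (hp : p ∈ d.boxes) (hp' : p' ∈ boxesOf R) : labelOf (d :: R) p' < labelOf (d :: R) p := by
  rw [labelOf_cons_of_mem_tail hdisj hp', labelOf, if_pos hp]
  exact Nat.lt_succ_of_le (labelOf_le_length R p')

theorem IsYoungDiagramSet.mem_of_le {S : Finset (ℕ × ℕ)} (hS : IsYoungDiagramSet S) {l l' : ℕ}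
    (h : (i, l) ∈ S) (h1 : 1 ≤ l') (h2 : l' ≤ l) : (i, l') ∈ S := by
  induction l, h2 using Nat.le_induction with
  | base => exact h
  | succ l hl ih => exact ih (hS.2.1 i l h (h1.trans hl))

/-- A box of the removed domino would carry a larger label than the remaining box after it. -/
theorem IsStandardDT.tail (hT : IsStandardDT (d :: R)) : IsStandardDT R := by
  have hdisj := hT.disjoint_head
  obtain ⟨hval, hpair, hY, hcol, hrow⟩ := hT
  have hsub : boxesOf R ⊆ boxesOf (d :: R) := Finset.subset_union_right
  have htail : ∀ {p p'}, p ∈ boxesOf (d :: R) → p' ∈ boxesOf R →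
      labelOf (d :: R) p ≤ labelOf (d :: R) p' → p ∈ boxesOf R := by
    intro p p' hp hp' hle
    rcases Finset.mem_union.mp hp with hpd | hpR
    · exact absurd hle (labelOf_cons_lt hdisj hpd hp').not_ge
    · exact hpR
  refine ⟨fun e he => hval e (List.mem_cons_of_mem d he), (List.pairwise_cons.mp hpair).2,
    ⟨fun p hp => hY.1 p (hsub hp), fun i l hl h1 => ?_, fun i l hl h1 => ?_⟩,
    fun i l h1 h2 => ?_, fun i l h1 h2 => ?_⟩
  · have hT1 := hY.2.1 i l (hsub hl) h1
    exact htail hT1 hl (hrow i l hT1 (hsub hl))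
  · have hT1 := hY.2.2 i l (hsub hl) h1
    exact htail hT1 hl (hcol i l hT1 (hsub hl))
  · simpa only [labelOf_cons_of_mem_tail hdisj h1, labelOf_cons_of_mem_tail hdisj h2]
      using hcol i l (hsub h1) (hsub h2)
  · simpa only [labelOf_cons_of_mem_tail hdisj h1, labelOf_cons_of_mem_tail hdisj h2]
      using hrow i l (hsub h1) (hsub h2)

theorem rowLen_eq_of_forall {T : List Domino} {m : ℕ}
    (h : ∀ l, (i, l) ∈ boxesOf T ↔ 1 ≤ l ∧ l ≤ m) : rowLen T i = m := by
  have : (boxesOf T).filter (fun p => p.1 = i) =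
      (Finset.Icc 1 m).map ⟨(i, ·), Prod.mk_right_injective i⟩ := by
    ext ⟨r, l⟩
    simp only [Finset.mem_filter, Finset.mem_map, Finset.mem_Icc, Function.Embedding.coeFn_mk,
      Prod.mk.injEq]
    constructor
    · rintro ⟨hl, rfl⟩
      exact ⟨l, (h l).mp hl, rfl, rfl⟩
    · rintro ⟨l, hl, rfl, rfl⟩
      exact ⟨(h l).mpr hl, rfl⟩
  rw [rowLen, this, Finset.card_map, Nat.card_Icc, Nat.add_sub_cancel]

/-- A box to the right of `(i, l)` would carry a smaller label. -/
theorem IsStandardDT.rowLen_cons_of_mem (hT : IsStandardDT (d :: R)) {l : ℕ}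
    (hd : (i, l) ∈ d.boxes) (hl : (i, l + 1) ∉ d.boxes) : rowLen (d :: R) i = l := by
  have hY := hT.2.2.1
  have hil : (i, l) ∈ boxesOf (d :: R) := Finset.mem_union_left _ hd
  refine rowLen_eq_of_forall fun l' => ⟨fun hl' => ⟨(hY.1 _ hl').2, ?_⟩,
    fun ⟨h1, h2⟩ => hY.mem_of_le hil h1 h2⟩
  by_contra hlt
  have hnext : (i, l + 1) ∈ boxesOf (d :: R) := hY.mem_of_le hl' (by omega) (by omega)
  have hnextR : (i, l + 1) ∈ boxesOf R := (Finset.mem_union.mp hnext).resolve_left hl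
  exact (labelOf_cons_lt hT.disjoint_head hd hnextR).not_ge (hT.2.2.2.2 i l hil hnext)

theorem rowLen_cons (hdisj : Disjoint d.boxes (boxesOf R)) (i : ℕ) :
    rowLen (d :: R) i = rowLen R i + (d.boxes.filter fun p => p.1 = i).card := by
  rw [rowLen, rowLen, boxesOf_cons, Finset.filter_union, add_comm,
    Finset.card_union_of_disjoint (Finset.disjoint_filter_filter hdisj)]

theorem mem_partsFinset {T : List Domino} {m : ℕ} : m ∈ partsFinset T ↔ m ∈ shapeOf T := by
  simp [partsFinset, shapeOf]

theorem rowLen_ne_zero_iff {T : List Domino} :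
    rowLen T i ≠ 0 ↔ i ∈ (boxesOf T).image Prod.fst := by
  simp [rowLen]

theorem shapeOf_eq_filter_map {T : List Domino} {U : Finset ℕ}
    (hU : (boxesOf T).image Prod.fst ⊆ U) :
    shapeOf T = (U.val.map (rowLen T)).filter (· ≠ 0) := by
  have hrows : U.filter (fun i => rowLen T i ≠ 0) = (boxesOf T).image Prod.fst := by
    ext i
    simp only [Finset.mem_filter, rowLen_ne_zero_iff, and_iff_right_iff_imp]
    exact fun h => hU h
  rw [Multiset.filter_map, shapeOf, ← hrows, Finset.filter_val]
  rfl

theorem shapeOf_cons_add (hdisj : Disjoint d.boxes (boxesOf R)) :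
    shapeOf (d :: R) + ((d.boxes.image Prod.fst).val.map (rowLen R)).filter (· ≠ 0) =
      shapeOf R + (d.boxes.image Prod.fst).val.map (rowLen (d :: R)) := by
  set S := d.boxes.image Prod.fst
  set U := (boxesOf (d :: R)).image Prod.fst
  have hSU : S ⊆ U := Finset.image_subset_image Finset.subset_union_left
  have hRU : (boxesOf R).image Prod.fst ⊆ U := Finset.image_subset_image Finset.subset_union_right
  have hsplit : U.val = (U \ S).val + S.val := by
    rw [Finset.sdiff_val, Multiset.sub_add_cancel (Finset.val_le_iff.mpr hSU)]
  have hout : ∀ i ∈ (U \ S).val, rowLen (d :: R) i = rowLen R i := by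
    intro i hi
    have hiS : i ∉ S := (Finset.mem_sdiff.mp hi).2
    rw [rowLen_cons hdisj, add_eq_left, Finset.card_eq_zero, Finset.filter_eq_empty_iff]
    exact fun p hp hpi => hiS (Finset.mem_image.mpr ⟨p, hp, hpi⟩)
  have hin : (S.val.map (rowLen (d :: R))).filter (· ≠ 0) = S.val.map (rowLen (d :: R)) := by
    refine Multiset.filter_eq_self.mpr fun m hm => ?_
    obtain ⟨i, hi, rfl⟩ := Multiset.mem_map.mp hm
    exact rowLen_ne_zero_iff.mpr (hSU hi)
  rw [shapeOf_eq_filter_map le_rfl, shapeOf_eq_filter_map hRU, hsplit, Multiset.map_add,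
    Multiset.map_add, Multiset.map_congr rfl hout, Multiset.filter_add, Multiset.filter_add, hin]
  abel

theorem IsStandardDT.shapeOf_cons_H (hT : IsStandardDT (.H i j :: R)) :
    shapeOf (.H i j :: R) + ({j - 1} : Multiset ℕ).filter (· ≠ 0) = shapeOf R + {j + 1} := by
  have hrow : rowLen (.H i j :: R) i = j + 1 :=
    hT.rowLen_cons_of_mem (by simp [Domino.boxes]) (by simp [Domino.boxes]; omega)
  have hrowR : rowLen R i = j - 1 := by
    have := rowLen_cons hT.disjoint_head i
    simp [Domino.boxes, Finset.filter_insert, Finset.filter_singleton] at this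
    omega
  simpa [Domino.boxes, hrow, hrowR] using shapeOf_cons_add hT.disjoint_head

theorem IsStandardDT.shapeOf_cons_V (hT : IsStandardDT (.V i j :: R)) :
    shapeOf (.V i j :: R) + ({j - 1, j - 1} : Multiset ℕ).filter (· ≠ 0) =
      shapeOf R + {j, j} := by
  have hrow : ∀ k, k = i ∨ k = i + 1 → rowLen (.V i j :: R) k = j := by
    rintro k (rfl | rfl) <;>
      exact hT.rowLen_cons_of_mem (by simp [Domino.boxes]) (by simp [Domino.boxes])
  have hrowR : ∀ k, k = i ∨ k = i + 1 → rowLen R k = j - 1 := by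
    intro k hk
    have := rowLen_cons hT.disjoint_head k
    rcases hk with rfl | rfl <;>
      simp [Domino.boxes, Finset.filter_insert, Finset.filter_singleton, hrow] at this <;> omega
  simpa [Domino.boxes, hrow, hrowR] using shapeOf_cons_add hT.disjoint_head

end Tableau

section ClusterMap

abbrev clusterMap (T : List Domino) : ℕ → Finset ℕ := (clusterData T).2

theorem le_length_of_mem_clusterMap :
    ∀ {T : List Domino} {m k : ℕ}, k ∈ clusterMap T m → k ≤ T.length
  | [], _, _, h => by simp [clusterMap, clusterData] at h
  | [_], _, _, h => by simp_all [clusterMap, clusterData]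
  | d :: e :: R, m, k, h => by
    have ih : ∀ {m k}, k ∈ clusterMap (e :: R) m → k ≤ (e :: R).length :=
      le_length_of_mem_clusterMap
    have hlen : (d :: e :: R).length = (e :: R).length + 1 := rfl
    cases d <;> simp only [clusterMap, clusterData] at h <;> split_ifs at h <;> grind

variable {i j : ℕ} {R : List Domino}

theorem clusterMap_ne_of_mem {C : Finset ℕ} (hC : R.length + 1 ∈ C) (m : ℕ) :
    clusterMap R m ≠ C := fun h =>
  (le_length_of_mem_clusterMap (h ▸ hC)).not_gt (Nat.lt_succ_self _)

theorem clusterMap_cons_H_of_even (hR : R ≠ []) (hj : j % 2 = 0) :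
    clusterMap (.H i j :: R) = clusterMap R := by
  simp [clusterMap, clusterData.eq_3 R i j hR, hj]

/-- When `j + 1` is not a part, the old value `b_R (j + 1)` is a leftover: only the point
`j + 1` itself joins the merged cluster. -/
theorem exists_clusterMap_cons_H_of_odd (hR : R ≠ []) (hj : j % 2 = 1) :
    ∃ C, (∀ m, clusterMap R m ≠ C) ∧ clusterMap (.H i j :: R) =
      mergeFibers (if j + 1 ∈ partsFinset R then clusterMap R
        else Function.update (clusterMap R) (j + 1) C) (j - 1) (j + 1) C := by
  have hfresh : ∀ m, clusterMap R m ≠ insert (R.length + 1) (if j + 1 ∈ partsFinset R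
      then clusterMap R (j - 1) ∪ clusterMap R (j + 1) else clusterMap R (j - 1)) :=
    clusterMap_ne_of_mem (Finset.mem_insert_self _ _)
  refine ⟨_, hfresh, funext fun u => ?_⟩
  have h2 : j + 1 - 2 = j - 1 := by omega
  simp only [clusterMap, clusterData.eq_3 R i j hR, hj, mergeFibers, h2, if_true] at hfresh ⊢
  by_cases hq : j + 1 ∈ partsFinset R
  · by_cases hu : u = j + 1 <;> simp [hq, hu]
  · simp only [hq, if_false] at hfresh
    by_cases hu : u = j + 1 <;> simp [hq, hu, hfresh u]

theorem exists_clusterMap_cons_V_of_odd (hR : R ≠ []) (hj : j % 2 = 1) :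
    ∃ C, (∀ m, clusterMap R m ≠ C) ∧
      clusterMap (.V i j :: R) = mergeFibers (clusterMap R) (j - 1) (j - 1) C := by
  refine ⟨_, clusterMap_ne_of_mem (Finset.mem_insert_self _ (clusterMap R (j - 1))),
    funext fun u => ?_⟩
  simp [clusterMap, clusterData.eq_4 R i j hR, hj, mergeFibers]

theorem exists_clusterMap_cons_V_of_even_of_mem (hR : R ≠ []) (hj : j % 2 = 0)
    (hjR : j ∈ partsFinset R) :
    ∃ C, (∀ m, clusterMap R m ≠ C) ∧
      clusterMap (.V i j :: R) = mergeFibers (clusterMap R) j j C := by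
  refine ⟨_, clusterMap_ne_of_mem (Finset.mem_insert_self _ (clusterMap R j)),
    funext fun u => ?_⟩
  by_cases hu : u = j <;> simp [clusterMap, clusterData.eq_4 R i j hR, hj, hjR, mergeFibers, hu]

theorem exists_clusterMap_cons_V_of_even_of_not_mem (hR : R ≠ []) (hj : j % 2 = 0)
    (hjR : j ∉ partsFinset R) :
    ∃ C, (∀ m, clusterMap R m ≠ C) ∧
      clusterMap (.V i j :: R) = Function.update (clusterMap R) j C := by
  refine ⟨_, clusterMap_ne_of_mem (Finset.mem_singleton_self _), funext fun u => ?_⟩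
  simp [clusterMap, clusterData.eq_4 R i j hR, hj, hjR, Function.update_apply]

theorem noncrossing_clusterMap : ∀ T : List Domino, Noncrossing fun k => clusterMap T (2 * k)
  | [] | [_] => fun _ _ _ _ _ _ _ _ _ => rfl
  | d :: e :: R => by
    have ih := noncrossing_clusterMap (e :: R)
    have hR : e :: R ≠ [] := List.cons_ne_nil e R
    have hdouble : Function.Injective (2 * · : ℕ → ℕ) := mul_right_injective₀ two_ne_zero
    cases d with
    | H i j =>
      obtain ⟨k, rfl | rfl⟩ := Nat.even_or_odd' j
      · rwa [clusterMap_cons_H_of_even hR (by omega)]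
      · obtain ⟨C, hC, h⟩ :=
          exists_clusterMap_cons_H_of_odd (i := i) (j := 2 * k + 1) hR (by omega)
        rw [h, show 2 * k + 1 - 1 = 2 * k by omega, show 2 * k + 1 + 1 = 2 * (k + 1) by ring]
        split_ifs
        · exact ih.mergeFibers (Or.inr rfl) fun u hu => absurd hu (hC _)
        · show Noncrossing (mergeFibers
            (Function.update (clusterMap (e :: R)) (2 * (k + 1)) C ∘ (2 * ·)) k (k + 1) C)
          rw [Function.update_comp_eq_of_injective _ hdouble]
          exact (ih.update (fun u => hC _) (k + 1)).mergeFibers (Or.inr rfl)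
            (eq_of_update_apply_eq (fun u => hC _) (k + 1))
    | V i j =>
      obtain ⟨k, rfl | rfl⟩ := Nat.even_or_odd' j
      · by_cases hp : 2 * k ∈ partsFinset (e :: R)
        · obtain ⟨C, hC, h⟩ := exists_clusterMap_cons_V_of_even_of_mem (i := i) hR (by omega) hp
          rw [h]
          exact ih.mergeFibers (Or.inl rfl) fun u hu => absurd hu (hC _)
        · obtain ⟨C, hC, h⟩ :=
            exists_clusterMap_cons_V_of_even_of_not_mem (i := i) hR (by omega) hp
          rw [h]
          show Noncrossing (Function.update (clusterMap (e :: R)) (2 * k) C ∘ (2 * ·))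
          rw [Function.update_comp_eq_of_injective _ hdouble]
          exact ih.update (fun u => hC _) k
      · obtain ⟨C, hC, h⟩ :=
          exists_clusterMap_cons_V_of_odd (i := i) (j := 2 * k + 1) hR (by omega)
        rw [h, show 2 * k + 1 - 1 = 2 * k by omega]
        exact ih.mergeFibers (Or.inl rfl) fun u hu => absurd hu (hC _)

theorem evenFibers_clusterMap :
    ∀ T : List Domino, IsStandardDT T → EvenFibers (shapeOf T) (clusterMap T)
  | [], _ => fun C _ => by simp [shapeOf, boxesOf]
  | [_], _ => fun C hC => by
    rw [Multiset.filter_eq_nil.mpr fun m _ hm => hC (hm.2.symm.trans rfl)]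
    exact Even.zero
  | d :: e :: R, hT => by
    have ih := evenFibers_clusterMap (e :: R) hT.tail
    have hR : e :: R ≠ [] := List.cons_ne_nil e R
    cases d with
    | H i j =>
      have hshape := hT.shapeOf_cons_H
      obtain ⟨k, rfl | rfl⟩ := Nat.even_or_odd' j
      · have hk : 1 ≤ 2 * k := (hT.1 _ List.mem_cons_self).2
        rw [clusterMap_cons_H_of_even hR (by omega)]
        refine ih.of_add_eq_add hshape fun C _ => ?_
        simp [Multiset.filter_singleton, Nat.even_iff, show (2 * k - 1) % 2 = 1 by omega,
          show (2 * k + 1) % 2 = 1 by omega]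
      · obtain ⟨C, hC, h⟩ :=
          exists_clusterMap_cons_H_of_odd (i := i) (j := 2 * k + 1) hR (by omega)
        simp only [Nat.add_sub_cancel] at h hshape
        obtain ⟨g, hg, hgC, hclus⟩ : ∃ g, EvenFibers (shapeOf (e :: R)) g ∧
            (∀ u, g u = C → u = 2 * k + 1 + 1) ∧
            clusterMap (.H i (2 * k + 1) :: e :: R) = mergeFibers g (2 * k) (2 * k + 1 + 1) C := by
          split_ifs at h with hq
          · exact ⟨_, ih, fun u hu => absurd hu (hC u), h⟩
          · exact ⟨_, ih.update (by omega) (mt mem_partsFinset.mpr hq) C,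
              eq_of_update_apply_eq hC _, h⟩
        rw [hclus]
        refine (hg.mergeFibers hgC).of_add_eq_add hshape fun X _ => ?_
        have hp : mergeFibers g (2 * k) (2 * k + 1 + 1) C (2 * k) = C := if_pos (Or.inl rfl)
        have hq : mergeFibers g (2 * k) (2 * k + 1 + 1) C (2 * k + 1 + 1) = C :=
          if_pos (Or.inr rfl)
        simp [Multiset.filter_singleton, hp, hq, Nat.even_iff, Nat.add_mod]
        split_ifs <;> simp
    | V i j =>
      have hshape := hT.shapeOf_cons_V
      have hpair : ∀ (f : ℕ → Finset ℕ) X, X ≠ f 0 →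
          (Even (Multiset.card (({j - 1, j - 1} : Multiset ℕ).filter fun m => Even m ∧ f m = X)) ↔
            Even (Multiset.card (({j, j} : Multiset ℕ).filter fun m => Even m ∧ f m = X))) :=
        fun _ _ _ => iff_of_true (even_card_filter_pair _ _) (even_card_filter_pair _ _)
      obtain ⟨k, rfl | rfl⟩ := Nat.even_or_odd' j
      · by_cases hp : 2 * k ∈ partsFinset (e :: R)
        · obtain ⟨C, hC, h⟩ := exists_clusterMap_cons_V_of_even_of_mem (i := i) hR (by omega) hp
          rw [h]
          exact (ih.mergeFibers fun u hu => absurd hu (hC _)).of_add_eq_add hshape (hpair _)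
        · obtain ⟨C, hC, h⟩ :=
            exists_clusterMap_cons_V_of_even_of_not_mem (i := i) hR (by omega) hp
          have hk : 1 ≤ 2 * k := (hT.1 _ List.mem_cons_self).2
          rw [h]
          exact (ih.update (by omega) (mt mem_partsFinset.mpr hp) C).of_add_eq_add hshape
            (hpair _)
      · obtain ⟨C, hC, h⟩ :=
          exists_clusterMap_cons_V_of_odd (i := i) (j := 2 * k + 1) hR (by omega)
        rw [h]
        exact (ih.mergeFibers fun u hu => absurd hu (hC _)).of_add_eq_add hshape (hpair _)

end ClusterMap

section FibersOn

variable {α : Type*} [DecidableEq α] (B : Finset ℕ) (g : ℕ → α)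

theorem isPartitionOf_image_fibers :
    IsPartitionOf B (B.image fun v => B.filter fun w => g w = g v) := by
  refine ⟨?_, ?_, fun b hb => ⟨B.filter fun w => g w = g b,
    ⟨Finset.mem_image_of_mem _ hb, Finset.mem_filter.mpr ⟨hb, rfl⟩⟩, ?_⟩⟩
  · simp only [Finset.forall_mem_image]
    exact fun v hv => ⟨v, Finset.mem_filter.mpr ⟨hv, rfl⟩⟩
  · simp only [Finset.forall_mem_image]
    exact fun v _ => Finset.filter_subset _ _
  · rintro _ ⟨hL, hbL⟩
    obtain ⟨v, -, rfl⟩ := Finset.mem_image.mp hL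
    simp only [(Finset.mem_filter.mp hbL).2]

theorem pairwiseNoncrossing_image_fibers (hB : ∀ b ∈ B, Even b)
    (hg : Noncrossing fun k => g (2 * k)) :
    PairwiseNoncrossing (B.image fun v => B.filter fun w => g w = g v) := by
  simp only [PairwiseNoncrossing, Finset.forall_mem_image]
  intro v _ v' _ hne a ha b hb c hc d hd hab hcd
  have hvv' : g v ≠ g v' := fun h => hne (by simp only [h])
  obtain ⟨haB, hga⟩ := Finset.mem_filter.mp ha
  obtain ⟨hbB, hgb⟩ := Finset.mem_filter.mp hb
  obtain ⟨hcB, hgc⟩ := Finset.mem_filter.mp hc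
  obtain ⟨hdB, hgd⟩ := Finset.mem_filter.mp hd
  have hbc : b ≠ c := fun h => hvv' (hgb.symm.trans (h ▸ hgc))
  have had : a ≠ d := fun h => hvv' (hga.symm.trans (h ▸ hgd))
  obtain ⟨a, rfl⟩ := (hB _ haB).two_dvd
  obtain ⟨b, rfl⟩ := (hB _ hbB).two_dvd
  obtain ⟨c, rfl⟩ := (hB _ hcB).two_dvd
  obtain ⟨d, rfl⟩ := (hB _ hdB).two_dvd
  by_cases hdisj : 2 * b < 2 * c ∨ 2 * d < 2 * a
  · left
    ext t
    simp only [Finset.mem_inter, Finset.mem_Icc, Finset.notMem_empty, iff_false]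
    omega
  by_cases hsub : 2 * c ≤ 2 * a ∧ 2 * b ≤ 2 * d
  · exact Or.inr (Or.inl (Finset.Icc_subset_Icc hsub.1 hsub.2))
  by_cases hsup : 2 * a ≤ 2 * c ∧ 2 * d ≤ 2 * b
  · exact Or.inr (Or.inr (Finset.Icc_subset_Icc hsup.1 hsup.2))
  exfalso
  rcases (by omega : (a < c ∧ c < b ∧ b < d) ∨ (c < a ∧ a < d ∧ d < b)) with
    ⟨h1, h2, h3⟩ | ⟨h1, h2, h3⟩
  · exact hvv' (hga.symm.trans ((hg h1 h2 h3 (hga.trans hgb.symm) (hgc.trans hgd.symm)).trans hgc))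
  · exact hvv'
      (hga.symm.trans ((hg h1 h2 h3 (hgc.trans hgd.symm) (hga.trans hgb.symm)).symm.trans hgc))

end FibersOn

theorem even_of_mem_Blam {ℓ : ℕ} {x : ℕ → ℕ} {b : ℕ} (hb : b ∈ Blam ℓ x) : Even b := by
  rcases Finset.mem_insert.mp hb with rfl | hb
  · exact Even.zero
  · obtain ⟨i, -, rfl⟩ := Finset.mem_image.mp hb
    exact even_two_mul _

theorem sum_filter_mem_fiber_eq_card {α : Type*} [DecidableEq α] {ℓ : ℕ} {x r : ℕ → ℕ}
    {μ : Multiset ℕ} (g : ℕ → α) (X : α)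
    (hx : ∀ i ∈ Finset.Icc 1 ℓ, ∀ j ∈ Finset.Icc 1 ℓ, i < j → x j < x i)
    (hcount : ∀ i ∈ Finset.Icc 1 ℓ, μ.count (2 * x i) = r i)
    (honly : ∀ m ∈ μ, Even m → ∃ i ∈ Finset.Icc 1 ℓ, m = 2 * x i) :
    ∑ j ∈ (Finset.Icc 1 ℓ).filter (fun j => 2 * x j ∈ (Blam ℓ x).filter fun w => g w = X), r j =
      Multiset.card (μ.filter fun m => Even m ∧ g m = X) := by
  have hinj : Set.InjOn (fun j => 2 * x j) (Finset.Icc 1 ℓ) := by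
    intro i hi j hj hij
    rcases lt_trichotomy i j with h | h | h
    · have := hx i hi j hj h; simp only at hij; omega
    · exact h
    · have := hx j hj i hi h; simp only at hij; omega
  set s := (Finset.Icc 1 ℓ).filter fun j => g (2 * x j) = X
  have hs : (Finset.Icc 1 ℓ).filter (fun j => 2 * x j ∈ (Blam ℓ x).filter fun w => g w = X) = s :=
    Finset.filter_congr fun j hj => by
      simp [Finset.mem_filter, Blam, Finset.mem_image_of_mem _ hj]
  have hcover : ∀ m ∈ μ.filter (fun m => Even m ∧ g m = X), m ∈ s.image fun j => 2 * x j := by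
    intro m hm
    obtain ⟨hmμ, hev, hgm⟩ := Multiset.mem_filter.mp hm
    obtain ⟨i, hi, rfl⟩ := honly m hmμ hev
    exact Finset.mem_image_of_mem _ (Finset.mem_filter.mpr ⟨hi, hgm⟩)
  rw [hs, ← Multiset.sum_count_eq_card hcover,
    Finset.sum_image (hinj.mono (Finset.filter_subset _ _))]
  refine Finset.sum_congr rfl fun j hj => ?_
  obtain ⟨hj, hgj⟩ := Finset.mem_filter.mp hj
  rw [Multiset.count_filter_of_pos ⟨even_two_mul _, hgj⟩, hcount j hj]

theorem stmt1_general (ℓ : ℕ) (x r : ℕ → ℕ)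
    (hx : ∀ i ∈ Finset.Icc 1 ℓ, ∀ j ∈ Finset.Icc 1 ℓ, i < j → x j < x i)
    (T : List Domino) (hT : IsAdmissibleC T)
    (hcount : ∀ i ∈ Finset.Icc 1 ℓ, (shapeOf T).count (2 * x i) = r i)
    (honly : ∀ m ∈ shapeOf T, Even m → ∃ i ∈ Finset.Icc 1 ℓ, m = 2 * x i) :
    IsEvenNCP ℓ x r (fibersOf ℓ x T) := by
  refine ⟨⟨isPartitionOf_image_fibers _ _, pairwiseNoncrossing_image_fibers _ _
    (fun _ => even_of_mem_Blam) (noncrossing_clusterMap T)⟩, ?_⟩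
  intro L hL h0
  obtain ⟨v, -, rfl⟩ := Finset.mem_image.mp hL
  rw [sum_filter_mem_fiber_eq_card _ _ hx hcount honly]
  exact evenFibers_clusterMap T hT.1 _ fun h =>
    h0 (Finset.mem_filter.mpr ⟨Finset.mem_insert_self 0 _, h.symm⟩)

/-- Proposition 2.12: for an admissible domino tableau `T` of type C whose shape has
distinct even parts `2x₁ > … > 2x_ℓ` with multiplicities `r₁, …, r_ℓ`, the partition of
`B_λ = {0, 2x₁, …, 2x_ℓ}` into the fibers of `b_T` over the open clusters is an even
noncrossing partition of `B_λ`. -/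
theorem stmt1 (ℓ : ℕ) (x r : ℕ → ℕ)
    (hx : ∀ i ∈ Finset.Icc 1 ℓ, ∀ j ∈ Finset.Icc 1 ℓ, i < j → x j < x i)
    (hxpos : ∀ i ∈ Finset.Icc 1 ℓ, 0 < x i)
    (hr : ∀ i ∈ Finset.Icc 1 ℓ, 0 < r i)
    (T : List Domino) (hT : IsAdmissibleC T)
    (hcount : ∀ i ∈ Finset.Icc 1 ℓ, (shapeOf T).count (2 * x i) = r i)
    (honly : ∀ m ∈ shapeOf T, Even m → ∃ i ∈ Finset.Icc 1 ℓ, m = 2 * x i) :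
    IsEvenNCP ℓ x r (fibersOf ℓ x T) :=
  stmt1_general ℓ x r hx T hT hcount honly
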